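/- arXiv:1109.4673 — 6 statements merged into one kernel-verified Lean document; each statement's English description precedes it below -/
import Mathlib

section
/- The tenacity of the cycle C_n on n vertices equals (n+3)/(n−1) if n is odd, and (n+2)/n if n is even (for n ≥ 4; for odd n ≥ 5). -/
open SimpleGraph

/-- Number of connected components `ω(G)`. -/
noncomputable def SimpleGraph.omegaComp {W : Type*} (G : SimpleGraph W) : ℕ :=
  Nat.card G.ConnectedComponent

/-- Order `τ(G)` of a largest connected component of `G`. -/
noncomputable def SimpleGraph.tauMax {W : Type*} (G : SimpleGraph W) : ℕ :=
  sSup (Set.range fun c : G.ConnectedComponent =>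
    Nat.card {v : W // G.connectedComponentMk v = c})

/-- The graph `G - X` obtained by deleting the vertices of `X`. -/
def SimpleGraph.delVerts {V : Type*} (G : SimpleGraph V) (X : Finset V) :
    SimpleGraph {v : V // v ∉ X} :=
  SimpleGraph.comap Subtype.val G

/-- `X` is a vertex cut of `G`: deleting `X` leaves more than one component. -/
def SimpleGraph.IsVertexCut {V : Type*} (G : SimpleGraph V) (X : Finset V) : Prop :=
  1 < (G.delVerts X).omegaComp

/-- The tenacity `T(G) = min over vertex cuts X of (|X| + τ(G−X)) / ω(G−X)`. -/
noncomputable def SimpleGraph.tenacity {V : Type*} [Fintype V] (G : SimpleGraph V) : ℝ :=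
  sInf { t : ℝ | ∃ X : Finset V, G.IsVertexCut X ∧
    t = ((X.card : ℝ) + (G.delVerts X).tauMax) / (G.delVerts X).omegaComp }

/-- Vertex degree via `Nat.card` (no decidability assumptions needed). -/
noncomputable def SimpleGraph.deg {V : Type*} (G : SimpleGraph V) (v : V) : ℕ :=
  Nat.card (G.neighborSet v)

/-- A unicyclic graph: connected with as many edges as vertices. -/
def SimpleGraph.Unicyclic {V : Type*} [Fintype V] (G : SimpleGraph V) : Prop :=
  G.Connected ∧ Nat.card G.edgeSet = Fintype.card V

/-!
Deleting a set `X` of `k ≥ 1` vertices from `C_n` leaves at most `k` components, because every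
component is a run of consecutive vertices whose predecessor lies in `X`. The `n - k` surviving
vertices lie in `ω` components of order at most `τ`, so `n ≤ k + ωτ`; together with `ω ≤ k` and
`ω ≤ n - k` this forces `(k + τ)/ω ≥ (n + 2)/n`. For odd `n` we even have `2ω < n`, and then
either `τ = 1`, so that `k = n - ω`, or `k + τ ≥ ω + 2`; both give `(k + τ)/ω ≥ (n + 3)/(n - 1)`.
Keeping only the even vertices other than `n - 1` leaves `⌊n/2⌋` isolated vertices and attains
the bound.
-/

lemma Finset.natCard_subtype_notMem_add_card {α : Type*} [Fintype α] (X : Finset α) :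
    Nat.card {v // v ∉ X} + X.card = Fintype.card α := by
  classical
  rw [Nat.card_eq_fintype_card, Fintype.card_subtype_compl, Fintype.card_coe]
  exact Nat.sub_add_cancel X.card_le_univ

namespace SimpleGraph

section Components

variable {W : Type*} [Finite W] (G : SimpleGraph W)

lemma omegaComp_le_card : G.omegaComp ≤ Nat.card W :=
  Nat.card_le_card_of_surjective _ Quot.mk_surjective

lemma card_le_omegaComp_mul_tauMax : Nat.card W ≤ G.omegaComp * G.tauMax := by
  classical
  have := Fintype.ofFinite W
  have : Fintype G.ConnectedComponent := Fintype.ofFinite _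
  have hfiber (c : G.ConnectedComponent) :
      Nat.card {v : W // G.connectedComponentMk v = c} ≤ G.tauMax :=
    le_csSup (Set.finite_range _).bddAbove (Set.mem_range_self c)
  calc Nat.card W = ∑ c : G.ConnectedComponent,
        Nat.card {v : W // G.connectedComponentMk v = c} := by
        rw [Nat.card_eq_fintype_card,
          ← Fintype.card_congr (Equiv.sigmaFiberEquiv G.connectedComponentMk), Fintype.card_sigma]
        simp only [Nat.card_eq_fintype_card]
    _ ≤ ∑ _c : G.ConnectedComponent, G.tauMax := Finset.sum_le_sum fun c _ => hfiber c
    _ = G.omegaComp * G.tauMax := by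
        rw [Finset.sum_const, Finset.card_univ, smul_eq_mul, omegaComp, Nat.card_eq_fintype_card]

end Components

lemma omegaComp_bot {W : Type*} : (⊥ : SimpleGraph W).omegaComp = Nat.card W :=
  (Nat.card_eq_of_bijective _ ⟨fun _ _ h => reachable_bot.mp (ConnectedComponent.exact h),
    Quot.mk_surjective⟩).symm

lemma tauMax_bot_le_one {W : Type*} : (⊥ : SimpleGraph W).tauMax ≤ 1 := by
  refine csSup_le' ?_
  rintro _ ⟨c, rfl⟩
  have : Subsingleton {v : W // (⊥ : SimpleGraph W).connectedComponentMk v = c} :=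
    ⟨fun u v => Subtype.ext (reachable_bot.mp (ConnectedComponent.exact (u.2.trans v.2.symm)))⟩
  exact Finite.card_le_one_iff_subsingleton.mpr this

variable {V : Type*} {G : SimpleGraph V} {X : Finset V}

lemma IsVertexCut.nonempty (hG : G.Preconnected) (hX : G.IsVertexCut X) : X.Nonempty := by
  rw [Finset.nonempty_iff_ne_empty]
  rintro rfl
  have e : G.delVerts ∅ ≃g G := ⟨Equiv.subtypeUnivEquiv fun v => Finset.notMem_empty v, Iff.rfl⟩
  have := (e.preconnected_iff.mpr hG).subsingleton_connectedComponent
  exact hX.not_ge (Finite.card_le_one_iff_subsingleton.mpr this)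

noncomputable def cutRatio (G : SimpleGraph V) (X : Finset V) : ℝ :=
  ((X.card : ℝ) + (G.delVerts X).tauMax) / (G.delVerts X).omegaComp

lemma tenacity_le_cutRatio [Fintype V] (hX : G.IsVertexCut X) : G.tenacity ≤ G.cutRatio X :=
  csInf_le ⟨0, by rintro _ ⟨Y, -, rfl⟩; positivity⟩ ⟨X, hX, rfl⟩

lemma le_tenacity [Fintype V] {a : ℝ} (hX : G.IsVertexCut X)
    (h : ∀ Y, G.IsVertexCut Y → a ≤ G.cutRatio Y) : a ≤ G.tenacity :=
  le_csInf ⟨_, X, hX, rfl⟩ fun _ ⟨Y, hY, hs⟩ => hs ▸ h Y hY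

end SimpleGraph

noncomputable def cycleTenacity (n : ℕ) : ℝ :=
  if Odd n then ((n : ℝ) + 3) / ((n : ℝ) - 1) else ((n : ℝ) + 2) / n

/-- `k`, `w`, `t` play the roles of `|X|`, `ω(C_n - X)` and `τ(C_n - X)`. -/
lemma cycleTenacity_le_div {n k w t : ℕ} (hw : 0 < w) (hwk : w ≤ k) (hwn : w + k ≤ n)
    (hcover : n ≤ k + w * t) : cycleTenacity n ≤ (k + t) / w := by
  have hw' : (0 : ℝ) < w := by exact_mod_cast hw
  have hwk' : (w : ℝ) ≤ k := by exact_mod_cast hwk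
  unfold cycleTenacity
  split_ifs with hodd
  · have h2w : 2 * (w : ℝ) + 1 ≤ n := by
      exact_mod_cast (by obtain ⟨j, rfl⟩ := hodd; omega : 2 * w + 1 ≤ n)
    rw [div_le_div_iff₀ (by linarith) hw']
    rcases Nat.lt_or_ge t 2 with ht | ht
    · obtain rfl : t = 1 := by interval_cases t <;> omega
      have hk : (k : ℝ) + w = n := by exact_mod_cast (by omega : k + w = n)
      push_cast
      nlinarith
    · have ht' : (2 : ℝ) ≤ t := by exact_mod_cast ht
      nlinarith
  · have h2w : 2 * (w : ℝ) ≤ n := by exact_mod_cast (by omega : 2 * w ≤ n)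
    have hcover' : (n : ℝ) ≤ k + w * t := by exact_mod_cast hcover
    have hw1 : (1 : ℝ) ≤ w := by exact_mod_cast hw
    have hn : (0 : ℝ) < n := by linarith
    rw [div_le_div_iff₀ hn hw']
    -- times `w`: `n w (k + t) ≥ n k w + n (n - k) ≥ n w (w - 1) + n² ≥ (n + 2) w²`
    nlinarith [mul_le_mul_of_nonneg_left hcover' hn.le,
      mul_nonneg (mul_nonneg hn.le (sub_nonneg.2 hw1)) (sub_nonneg.2 hwk'),
      mul_nonneg (sub_nonneg.2 h2w) (by positivity : (0 : ℝ) ≤ n + w)]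

lemma div_le_cycleTenacity {n k w t : ℕ} (hn : 2 ≤ n) (hw : 0 < w) (hkw : k + w = n)
    (ht : t ≤ 1) (hwn : n ≤ 2 * w + 1) : (k + t) / w ≤ cycleTenacity n := by
  have hw' : (0 : ℝ) < w := by exact_mod_cast hw
  have hk : (k : ℝ) + w = n := by exact_mod_cast hkw
  have ht' : (t : ℝ) ≤ 1 := by exact_mod_cast ht
  unfold cycleTenacity
  split_ifs with hodd
  · have hn' : (2 : ℝ) ≤ n := by exact_mod_cast hn
    have hwn' : (n : ℝ) ≤ 2 * w + 1 := by exact_mod_cast hwn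
    rw [div_le_div_iff₀ hw' (by linarith)]
    nlinarith
  · have hwn' : (n : ℝ) ≤ 2 * w := by
      exact_mod_cast (by rw [Nat.not_odd_iff_even] at hodd; obtain ⟨j, rfl⟩ := hodd; omega)
    rw [div_le_div_iff₀ hw' (by linarith)]
    nlinarith

section CycleGraph

open Fin.NatCast Fin.CommRing

variable {m : ℕ} {X : Finset (Fin (m + 2))}

lemma cycleGraph_adj_iff_val {a b : Fin (m + 2)} :
    (cycleGraph (m + 2)).Adj a b ↔
      a.val = (b.val + 1) % (m + 2) ∨ b.val = (a.val + 1) % (m + 2) := by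
  rw [cycleGraph_adj, sub_eq_iff_eq_add', sub_eq_iff_eq_add', Fin.ext_iff, Fin.ext_iff,
    Fin.val_add, Fin.val_add, Fin.val_one]

lemma cycleGraph_delVerts_exists_reachable_pred_mem (j : ℕ) (u : Fin (m + 2)) (hu : u ∉ X)
    (hj : u - j ∈ X) : ∃ (v : Fin (m + 2)) (hv : v ∉ X), v - 1 ∈ X ∧
      ((cycleGraph (m + 2)).delVerts X).Reachable ⟨u, hu⟩ ⟨v, hv⟩ := by
  induction j generalizing u with
  | zero => exact absurd (by simpa using hj) hu
  | succ j ih =>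
    by_cases hpred : u - 1 ∈ X
    · exact ⟨u, hu, hpred, .rfl⟩
    · obtain ⟨v, hv, hv1, hr⟩ := ih (u - 1) hpred (by convert hj using 1; push_cast; ring)
      have hadj : ((cycleGraph (m + 2)).delVerts X).Adj ⟨u, hu⟩ ⟨u - 1, hpred⟩ :=
        cycleGraph_adj.mpr (.inl (sub_sub_cancel u 1))
      exact ⟨v, hv, hv1, hadj.reachable.trans hr⟩

lemma cycleGraph_delVerts_exists_pred_mem (hX : X.Nonempty)
    (c : ((cycleGraph (m + 2)).delVerts X).ConnectedComponent) :
    ∃ v : {v // v ∉ X}, v.1 - 1 ∈ X ∧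
      ((cycleGraph (m + 2)).delVerts X).connectedComponentMk v = c := by
  induction c using ConnectedComponent.ind with | h u =>
  obtain ⟨x, hx⟩ := hX
  obtain ⟨v, hv, hv1, hr⟩ :=
    cycleGraph_delVerts_exists_reachable_pred_mem (u.1 - x).val u.1 u.2 (by simpa using hx)
  exact ⟨⟨v, hv⟩, hv1, (ConnectedComponent.sound hr).symm⟩

lemma cycleGraph_delVerts_omegaComp_le (hX : X.Nonempty) :
    ((cycleGraph (m + 2)).delVerts X).omegaComp ≤ X.card := by
  choose v hv hvc using cycleGraph_delVerts_exists_pred_mem hX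
  have hinj : Function.Injective fun c => (⟨(v c).1 - 1, hv c⟩ : X) := by
    intro c c' h
    rw [← hvc c, ← hvc c', Subtype.ext (sub_left_injective (congrArg Subtype.val h))]
  exact (Nat.card_le_card_of_injective _ hinj).trans_eq (Nat.card_eq_finsetCard X)

lemma cycleTenacity_le_cutRatio (hX : (cycleGraph (m + 2)).IsVertexCut X) :
    cycleTenacity (m + 2) ≤ (cycleGraph (m + 2)).cutRatio X := by
  have hcard := X.natCard_subtype_notMem_add_card
  rw [Fintype.card_fin] at hcard
  have hωk := cycleGraph_delVerts_omegaComp_le (hX.nonempty cycleGraph_preconnected)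
  have hω := ((cycleGraph (m + 2)).delVerts X).omegaComp_le_card
  have hcover := ((cycleGraph (m + 2)).delVerts X).card_le_omegaComp_mul_tauMax
  exact cycleTenacity_le_div (by unfold IsVertexCut at hX; omega) hωk (by omega) (by omega)

def alternatingCut (n : ℕ) : Finset (Fin n) := {v | Odd v.val ∨ v.val + 1 = n}

lemma notMem_alternatingCut {n : ℕ} {v : Fin n} :
    v ∉ alternatingCut n ↔ Even v.val ∧ v.val + 1 < n := by
  simp only [alternatingCut, Finset.mem_filter, Finset.mem_univ, true_and, not_or,
    Nat.not_odd_iff_even]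
  exact and_congr_right fun _ => by have := v.isLt; omega

lemma delVerts_alternatingCut : (cycleGraph (m + 2)).delVerts (alternatingCut (m + 2)) = ⊥ := by
  ext ⟨a, ha⟩ ⟨b, hb⟩
  rw [notMem_alternatingCut] at ha hb
  obtain ⟨⟨i, hi⟩, ha⟩ := ha
  obtain ⟨⟨j, hj⟩, hb⟩ := hb
  simp only [bot_adj, iff_false]
  change ¬ (cycleGraph (m + 2)).Adj a b
  rw [cycleGraph_adj_iff_val, Nat.mod_eq_of_lt ha, Nat.mod_eq_of_lt hb]
  omega

lemma half_le_card_notMem_alternatingCut (n : ℕ) :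
    n / 2 ≤ Nat.card {v // v ∉ alternatingCut n} := by
  have hinj : Function.Injective fun i : Fin (n / 2) =>
      (⟨⟨2 * i, by have := i.isLt; omega⟩,
        notMem_alternatingCut.mpr ⟨even_two_mul _, by dsimp only; have := i.isLt; omega⟩⟩ :
        {v // v ∉ alternatingCut n}) := by
    intro i j h
    simpa [Fin.ext_iff] using h
  simpa using Nat.card_le_card_of_injective _ hinj

lemma isVertexCut_alternatingCut (hm : 2 ≤ m) :
    (cycleGraph (m + 2)).IsVertexCut (alternatingCut (m + 2)) := by
  have := half_le_card_notMem_alternatingCut (m + 2)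
  rw [IsVertexCut, delVerts_alternatingCut, omegaComp_bot]
  omega

lemma cutRatio_alternatingCut_le :
    (cycleGraph (m + 2)).cutRatio (alternatingCut (m + 2)) ≤ cycleTenacity (m + 2) := by
  have hhalf := half_le_card_notMem_alternatingCut (m + 2)
  have hcard := (alternatingCut (m + 2)).natCard_subtype_notMem_add_card
  rw [Fintype.card_fin] at hcard
  rw [cutRatio, delVerts_alternatingCut, omegaComp_bot]
  exact div_le_cycleTenacity (by omega) (by omega) (by omega) tauMax_bot_le_one (by omega)

end CycleGraph

theorem tenacity_cycleGraph (n : ℕ) (hn : 4 ≤ n) :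
    (SimpleGraph.cycleGraph n).tenacity =
      if Odd n then ((n : ℝ) + 3) / ((n : ℝ) - 1) else ((n : ℝ) + 2) / n := by
  obtain ⟨m, rfl⟩ : ∃ m, n = m + 2 := ⟨n - 2, by omega⟩
  have hcut := isVertexCut_alternatingCut (by omega : 2 ≤ m)
  exact le_antisymm ((tenacity_le_cutRatio hcut).trans cutRatio_alternatingCut_le)
    (le_tenacity hcut fun _ hX => cycleTenacity_le_cutRatio hX)
end

section
/- Let G be a connected graph. If there exists a vertex cut X₀ of G such that G−X₀ is a forest and ω(G−X₀) ≥ |X₀| + 2, then T(G) ≤ 1. -/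
open SimpleGraph

/-! Let `F = G - X₀`. While some component of the forest `F` has at least three vertices, it has
a vertex with two distinct neighbours; the edges to them are bridges, so deleting that vertex
separates them and raises the number of components by at least one. Deleting vertices greedily
in this way yields `S` with `τ(F - S) ≤ 2` and `ω(F - S) ≥ ω(F) + |S| ≥ |X₀| + |S| + 2`, so the cut
`X = X₀ ∪ S` has `|X| + τ(G - X) ≤ ω(G - X)`. -/

namespace SimpleGraph

variable {V W : Type*}

lemma Iso.omegaComp_eq {G : SimpleGraph V} {H : SimpleGraph W} (e : G ≃g H) :
    G.omegaComp = H.omegaComp :=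
  Nat.card_congr e.connectedComponentEquiv

lemma Iso.tauMax_eq {G : SimpleGraph V} {H : SimpleGraph W} (e : G ≃g H) :
    G.tauMax = H.tauMax := by
  have hsize : (fun c : G.ConnectedComponent => Nat.card {v // G.connectedComponentMk v = c}) =
      (fun c : H.ConnectedComponent => Nat.card {w // H.connectedComponentMk w = c}) ∘
        e.connectedComponentEquiv :=
    funext fun c => Nat.card_congr (ConnectedComponent.isoEquivSupp e c)
  rw [tauMax, tauMax, hsize, e.connectedComponentEquiv.surjective.range_comp]

lemma tauMax_le {G : SimpleGraph V} {n : ℕ}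
    (h : ∀ c : G.ConnectedComponent, Nat.card {v // G.connectedComponentMk v = c} ≤ n) :
    G.tauMax ≤ n :=
  csSup_le' <| Set.forall_mem_range.mpr h

def delVertsEmptyIso (G : SimpleGraph V) : G.delVerts ∅ ≃g G where
  toEquiv := Equiv.subtypeUnivEquiv fun v => Finset.notMem_empty v
  map_rel_iff' := Iff.rfl

def delVertsDelVertsIso [DecidableEq V] (G : SimpleGraph V) (X : Finset V)
    (Y : Finset {v // v ∉ X}) :
    (G.delVerts X).delVerts Y ≃g G.delVerts (X ∪ Y.map (Function.Embedding.subtype _)) where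
  toFun v := ⟨v.1.1, by
    simp only [Finset.mem_union, Finset.mem_map, Function.Embedding.coe_subtype, not_or,
      not_exists, not_and]
    exact ⟨v.1.2, fun w hw hwv => v.2 (Subtype.ext hwv ▸ hw)⟩⟩
  invFun v := ⟨⟨v.1, fun h => v.2 (Finset.mem_union_left _ h)⟩, fun h =>
    v.2 (Finset.mem_union_right _ (Finset.mem_map_of_mem _ h))⟩
  map_rel_iff' := Iff.rfl

lemma card_union_map_subtype [DecidableEq V] (X : Finset V) (Y : Finset {v // v ∉ X}) :
    (X ∪ Y.map (Function.Embedding.subtype _)).card = X.card + Y.card := by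
  rw [Finset.card_union_of_disjoint, Finset.card_map]
  simp only [Finset.disjoint_left, Finset.mem_map, Function.Embedding.coe_subtype]
  rintro _ hx ⟨v, -, rfl⟩
  exact v.2 hx

lemma IsAcyclic.delVerts {G : SimpleGraph V} (hG : G.IsAcyclic) (X : Finset V) :
    (G.delVerts X).IsAcyclic :=
  hG.of_comap (Function.Embedding.subtype _)

lemma Reachable.adj_or_exists_adj_adj {G : SimpleGraph V} {x y : V} (h : G.Reachable x y)
    (hxy : x ≠ y) : G.Adj x y ∨ ∃ v u₁ u₂, u₁ ≠ u₂ ∧ G.Adj v u₁ ∧ G.Adj v u₂ := by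
  classical
  obtain ⟨p, hp⟩ := h.some.toPath
  match p, hp with
  | .nil, _ => exact absurd rfl hxy
  | .cons h .nil, _ => exact .inl h
  | .cons h (.cons h' q), hp =>
    refine .inr ⟨_, x, _, fun hx => ?_, h.symm, h'⟩
    rw [Walk.cons_isPath_iff, Walk.support_cons, hx] at hp
    exact hp.2 (List.mem_cons_of_mem _ q.start_mem_support)

lemma exists_adj_adj_of_three_le_card_supp [Finite V] {G : SimpleGraph V}
    {c : G.ConnectedComponent} (hc : 3 ≤ Nat.card {v // G.connectedComponentMk v = c}) :
    ∃ v u₁ u₂, u₁ ≠ u₂ ∧ G.Adj v u₁ ∧ G.Adj v u₂ := by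
  have hc' : 2 < c.supp.ncard := by rw [← Nat.card_coe_set_eq]; exact hc
  obtain ⟨a, b, d, ha, hb, hd, hab, had, hbd⟩ := (Set.two_lt_ncard_iff).mp hc'
  have hreach {x y : V} (hx : x ∈ c.supp) (hy : y ∈ c.supp) : G.Reachable x y :=
    ConnectedComponent.exact (hx.trans hy.symm)
  obtain hadj_ab | hcenter := (hreach ha hb).adj_or_exists_adj_adj hab
  · obtain hadj_ad | hcenter := (hreach ha hd).adj_or_exists_adj_adj had
    · exact ⟨a, b, d, hbd, hadj_ab, hadj_ad⟩
    · exact hcenter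
  · exact hcenter

lemma IsAcyclic.not_reachable_delVerts_singleton {G : SimpleGraph V} (hG : G.IsAcyclic)
    {v u₁ u₂ : V} (hne : u₁ ≠ u₂) (h₁ : G.Adj v u₁) (h₂ : G.Adj v u₂)
    (hu₁ : u₁ ∉ ({v} : Finset V)) (hu₂ : u₂ ∉ ({v} : Finset V)) :
    ¬ (G.delVerts {v}).Reachable ⟨u₁, hu₁⟩ ⟨u₂, hu₂⟩ := by
  intro hreach
  let φ : G.delVerts {v} →g G.deleteEdges {s(v, u₁)} :=
    ⟨Subtype.val, fun {a b} hab => deleteEdges_adj.mpr ⟨hab, fun h => by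
      rcases Sym2.eq_iff.mp (Set.mem_singleton_iff.mp h) with ⟨ha, -⟩ | ⟨-, hb⟩
      exacts [a.2 (Finset.mem_singleton.mpr ha), b.2 (Finset.mem_singleton.mpr hb)]⟩⟩
  have hv₂ : (G.deleteEdges {s(v, u₁)}).Reachable v u₂ :=
    Adj.reachable <| deleteEdges_adj.mpr
      ⟨h₂, fun h => hne (Sym2.congr_right.mp (Set.mem_singleton_iff.mp h)).symm⟩
  exact isBridge_iff.mp (isAcyclic_iff_forall_adj_isBridge.mp hG h₁)
    (hv₂.trans (hreach.map φ).symm)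

lemma IsAcyclic.omegaComp_lt_delVerts_singleton [Finite V] {G : SimpleGraph V}
    (hG : G.IsAcyclic) {v u₁ u₂ : V} (hne : u₁ ≠ u₂) (h₁ : G.Adj v u₁) (h₂ : G.Adj v u₂) :
    G.omegaComp < (G.delVerts {v}).omegaComp := by
  have hu₁ : u₁ ∉ ({v} : Finset V) := by simpa using h₁.ne'
  have hu₂ : u₂ ∉ ({v} : Finset V) := by simpa using h₂.ne'
  let f := ConnectedComponent.map (⟨Subtype.val, id⟩ : G.delVerts {v} →g G)
  have hsurj : Function.Surjective f := by
    refine ConnectedComponent.ind fun w => ?_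
    by_cases hw : w = v
    · exact ⟨(G.delVerts {v}).connectedComponentMk ⟨u₁, hu₁⟩,
        ConnectedComponent.sound (hw ▸ h₁.symm.reachable)⟩
    · exact ⟨(G.delVerts {v}).connectedComponentMk ⟨w, by simpa using hw⟩, rfl⟩
  have hninj : ¬ Function.Injective f := fun hinj =>
    hG.not_reachable_delVerts_singleton hne h₁ h₂ hu₁ hu₂ <| ConnectedComponent.exact <|
      hinj <| ConnectedComponent.sound (h₁.symm.reachable.trans h₂.reachable)
  have hcard_ne : Nat.card (G.delVerts {v}).ConnectedComponent ≠ Nat.card G.ConnectedComponent :=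
    fun h => hninj ((Nat.bijective_iff_surjective_and_card f).mpr ⟨hsurj, h⟩).injective
  exact (Nat.card_le_card_of_surjective f hsurj).lt_of_ne' hcard_ne

theorem IsAcyclic.exists_tauMax_le_two {V : Type*} [Finite V] {G : SimpleGraph V}
    (hG : G.IsAcyclic) : ∃ S : Finset V,
      (G.delVerts S).tauMax ≤ 2 ∧ S.card + G.omegaComp ≤ (G.delVerts S).omegaComp := by
  classical
  by_cases hsmall : ∀ c : G.ConnectedComponent,
      Nat.card {v // G.connectedComponentMk v = c} ≤ 2
  · refine ⟨∅, ?_, ?_⟩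
    · rw [(delVertsEmptyIso G).tauMax_eq]
      exact tauMax_le hsmall
    · rw [(delVertsEmptyIso G).omegaComp_eq, Finset.card_empty, zero_add]
  obtain ⟨c, hc⟩ := not_forall.mp hsmall
  obtain ⟨v, u₁, u₂, hne, h₁, h₂⟩ := exists_adj_adj_of_three_le_card_supp (not_le.mp hc)
  obtain ⟨S, hτ, hω⟩ := (hG.delVerts {v}).exists_tauMax_le_two
  have e := delVertsDelVertsIso G {v} S
  refine ⟨{v} ∪ S.map (Function.Embedding.subtype _), ?_, ?_⟩
  · rwa [← e.tauMax_eq]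
  · rw [← e.omegaComp_eq, card_union_map_subtype, Finset.card_singleton]
    have := hG.omegaComp_lt_delVerts_singleton hne h₁ h₂
    omega
termination_by Nat.card V
decreasing_by exact Finite.card_subtype_lt (x := v) (not_not.mpr (Finset.mem_singleton_self v))

section Tenacity

variable [Fintype V] {G : SimpleGraph V} {X : Finset V}

lemma tenacity_le_of_isVertexCut (hX : G.IsVertexCut X) :
    G.tenacity ≤ ((X.card : ℝ) + (G.delVerts X).tauMax) / (G.delVerts X).omegaComp :=
  csInf_le ⟨0, by rintro _ ⟨Y, -, rfl⟩; positivity⟩ ⟨X, hX, rfl⟩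

lemma tenacity_le_one_of_card_add_tauMax_le (hX : G.IsVertexCut X)
    (h : X.card + (G.delVerts X).tauMax ≤ (G.delVerts X).omegaComp) : G.tenacity ≤ 1 := by
  have hω : (0 : ℝ) < (G.delVerts X).omegaComp := Nat.cast_pos.mpr (Nat.zero_lt_of_lt hX)
  refine (tenacity_le_of_isVertexCut hX).trans ?_
  rw [div_le_one hω]
  exact_mod_cast h

end Tenacity

end SimpleGraph

theorem tenacity_le_one_of_forest_cut_general {V : Type*} [Fintype V]
    (G : SimpleGraph V) (X₀ : Finset V)
    (hforest : (G.delVerts X₀).IsAcyclic)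
    (hω : X₀.card + 2 ≤ (G.delVerts X₀).omegaComp) :
    G.tenacity ≤ 1 := by
  classical
  obtain ⟨S, hτ, hωS⟩ := hforest.exists_tauMax_le_two
  have e := G.delVertsDelVertsIso X₀ S
  rw [e.tauMax_eq] at hτ
  rw [e.omegaComp_eq] at hωS
  have hcard := card_union_map_subtype X₀ S
  refine tenacity_le_one_of_card_add_tauMax_le (X := X₀ ∪ S.map (.subtype _)) ?_ (by omega)
  show 1 < _
  omega

theorem tenacity_le_one_of_forest_cut {V : Type*} [Fintype V]
    (G : SimpleGraph V) (hG : G.Connected) (X₀ : Finset V)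
    (hcut : G.IsVertexCut X₀) (hforest : (G.delVerts X₀).IsAcyclic)
    (hω : X₀.card + 2 ≤ (G.delVerts X₀).omegaComp) :
    G.tenacity ≤ 1 :=
  tenacity_le_one_of_forest_cut_general G X₀ hforest hω
end

section
/- For integers n, m with n−1 ≤ m ≤ C(n,2)−1 and k the unique integer satisfying C(k,2) + (n−k)(k−1) < m ≤ C(k,2) + (n−k)k, every connected graph G with n vertices and m edges satisfies T(G) ≥ (k+1)/(n−k). -/
open SimpleGraph

/-!
Let `X` be a vertex cut with `c = |X|`, `τ = τ(G - X)`, `ω = ω(G - X)`. A vertex outside `X` is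
adjacent only to vertices of `X` and of its own component, so summing degrees gives
`2m ≤ c(n - 1) + (n - c)(c + τ - 1)`. The right-hand side is increasing in `c` and in `c + τ`, so
the lower bound on `m` forces `c + τ ≥ k + 1`. The components of `G - X` partition `n - c`
vertices, hence `ω ≤ n + 1 - (c + τ)`, and since `s / (n + 1 - s)` increases with `s`,
`(c + τ) / ω ≥ (k + 1) / (n - k)`. As `m < C(n, 2)`, `G` is not complete, so vertex cuts exist
and the infimum defining `T(G)` is not the junk value `sInf ∅ = 0`.
-/

open Finset

namespace SimpleGraph

section Components

variable {W : Type*} (H : SimpleGraph W)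

lemma one_le_card_connectedComponent [Finite W] (c : H.ConnectedComponent) :
    1 ≤ Nat.card {v // H.connectedComponentMk v = c} :=
  have : Nonempty {v // H.connectedComponentMk v = c} := c.exists_rep.elim fun v hv => ⟨⟨v, hv⟩⟩
  Nat.card_pos

lemma card_connectedComponent_le_tauMax [Finite W] (c : H.ConnectedComponent) :
    Nat.card {v // H.connectedComponentMk v = c} ≤ H.tauMax :=
  le_csSup (Set.finite_range _).bddAbove ⟨c, rfl⟩

lemma one_le_tauMax [Finite W] [Nonempty W] : 1 ≤ H.tauMax :=
  (H.one_le_card_connectedComponent _).trans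
    (H.card_connectedComponent_le_tauMax (H.connectedComponentMk (Classical.arbitrary W)))

lemma tauMax_add_omegaComp_le [Finite W] : H.tauMax + H.omegaComp ≤ Nat.card W + 1 := by
  classical
  cases isEmpty_or_nonempty W
  · have : IsEmpty H.ConnectedComponent := ⟨fun c => c.exists_rep.elim fun v _ => isEmptyElim v⟩
    simp [tauMax, omegaComp, Set.range_eq_empty]
  have : Fintype H.ConnectedComponent := Fintype.ofFinite _
  set f := fun c : H.ConnectedComponent => Nat.card {v // H.connectedComponentMk v = c}
  obtain ⟨c₀, hc₀⟩ : H.tauMax ∈ Set.range f :=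
    Nat.sSup_mem (Set.range_nonempty f) (Set.finite_range f).bddAbove
  have hW : Nat.card W = f c₀ + ∑ c ∈ univ.erase c₀, f c := by
    rw [add_sum_erase _ _ (mem_univ c₀), ← Nat.card_sigma]
    exact Nat.card_congr (Equiv.sigmaFiberEquiv _).symm
  have hrest : Nat.card H.ConnectedComponent - 1 ≤ ∑ c ∈ univ.erase c₀, f c := by
    have := card_nsmul_le_sum (univ.erase c₀) f 1 fun c _ => H.one_le_card_connectedComponent c
    rwa [smul_eq_mul, mul_one, card_erase_of_mem (mem_univ _), card_univ,
      ← Nat.card_eq_fintype_card] at this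
  have : H.omegaComp = Nat.card H.ConnectedComponent := rfl
  omega

end Components

section Deletion

variable {V : Type*} [Fintype V] (G : SimpleGraph V) (X : Finset V)

variable {G X} in
lemma IsVertexCut.one_le_tauMax (h : G.IsVertexCut X) :
    1 ≤ (G.delVerts X).tauMax := by
  obtain ⟨⟨c⟩, -⟩ := Nat.card_pos_iff.mp (Nat.zero_lt_of_lt h)
  have : Nonempty {v // v ∉ X} := c.exists_rep.elim fun v _ => ⟨v⟩
  exact (G.delVerts X).one_le_tauMax

lemma card_add_tauMax_add_omegaComp_le :
    #X + (G.delVerts X).tauMax + (G.delVerts X).omegaComp ≤ Fintype.card V + 1 := by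
  classical
  have h := (G.delVerts X).tauMax_add_omegaComp_le
  rw [Nat.card_eq_fintype_card, Fintype.card_subtype_compl, Fintype.card_coe] at h
  have := X.card_le_univ
  omega

lemma degree_lt_card_add_tauMax [DecidableRel G.Adj] {v : V} (hv : v ∉ X) :
    G.degree v < #X + (G.delVerts X).tauMax := by
  classical
  set H := G.delVerts X
  set C := H.connectedComponentMk ⟨v, hv⟩
  set S : Finset V := ({w | H.connectedComponentMk w = C} : Finset _).map (.subtype _)
  have hS : #S ≤ H.tauMax := by
    rw [card_map, ← Fintype.card_subtype, ← Nat.card_eq_fintype_card]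
    exact H.card_connectedComponent_le_tauMax C
  have hsub : insert v (G.neighborFinset v) ⊆ X ∪ S := by
    intro w hw
    by_cases hwX : w ∈ X
    · exact mem_union_left _ hwX
    refine mem_union_right _ (mem_map.2 ⟨⟨w, hwX⟩, mem_filter.2 ⟨mem_univ _, ?_⟩, rfl⟩)
    rcases mem_insert.1 hw with rfl | hw
    · rfl
    · exact ConnectedComponent.connectedComponentMk_eq_of_adj
        (show H.Adj ⟨w, hwX⟩ ⟨v, hv⟩ from ((G.mem_neighborFinset v w).1 hw).symm)
  calc G.degree v < #(insert v (G.neighborFinset v)) := by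
        rw [card_insert_of_notMem (by simp), card_neighborFinset_eq_degree]
        exact Nat.lt_succ_self _
    _ ≤ #(X ∪ S) := card_le_card hsub
    _ ≤ #X + #S := card_union_le _ _
    _ ≤ #X + H.tauMax := by omega

lemma two_mul_card_edgeSet_le :
    2 * Nat.card G.edgeSet ≤ #X * (Fintype.card V - 1) +
      (Fintype.card V - #X) * (#X + (G.delVerts X).tauMax - 1) := by
  classical
  have hX : ∀ v ∈ X, G.degree v ≤ Fintype.card V - 1 := fun v _ => by
    have := G.degree_lt_card_verts v
    omega
  have hXc : ∀ v ∈ Xᶜ, G.degree v ≤ #X + (G.delVerts X).tauMax - 1 := fun v hv => by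
    have := G.degree_lt_card_add_tauMax X (mem_compl.1 hv)
    omega
  calc 2 * Nat.card G.edgeSet = ∑ v ∈ X, G.degree v + ∑ v ∈ Xᶜ, G.degree v := by
        rw [sum_add_sum_compl, sum_degrees_eq_twice_card_edges, edgeFinset_card,
          Nat.card_eq_fintype_card]
    _ ≤ #X * (Fintype.card V - 1) + #Xᶜ * (#X + (G.delVerts X).tauMax - 1) :=
        add_le_add (by simpa using sum_le_card_nsmul _ _ _ hX)
          (by simpa using sum_le_card_nsmul _ _ _ hXc)
    _ = _ := by rw [card_compl]

lemma isVertexCut_compl_pair [DecidableEq V] {u v : V} (huv : u ≠ v) (h : ¬G.Adj u v) :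
    G.IsVertexCut ({u, v} : Finset V)ᶜ := by
  have hmem : ∀ w : {w // w ∉ ({u, v} : Finset V)ᶜ}, w.1 = u ∨ w.1 = v := fun w => by
    simpa [or_iff_not_imp_left] using w.2
  have hbot : G.delVerts ({u, v} : Finset V)ᶜ = ⊥ := by
    ext a b
    simp only [delVerts, comap_adj, bot_adj, iff_false]
    rcases hmem a with ha | ha <;> rcases hmem b with hb | hb <;> rw [ha, hb]
    exacts [G.irrefl, h, fun h' => h h'.symm, G.irrefl]
  refine Finite.one_lt_card_iff_nontrivial.mpr ⟨(G.delVerts _).connectedComponentMk ⟨u, by simp⟩,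
    (G.delVerts _).connectedComponentMk ⟨v, by simp⟩, fun heq => huv ?_⟩
  have := ConnectedComponent.eq.mp heq
  rw [hbot, reachable_bot] at this
  exact congrArg Subtype.val this

lemma exists_ne_not_adj_of_card_edgeSet_lt
    (h : Nat.card G.edgeSet < (Fintype.card V).choose 2) : ∃ u v, u ≠ v ∧ ¬G.Adj u v := by
  classical
  by_contra! hadj
  obtain rfl : G = ⊤ := by
    ext u v
    exact ⟨G.ne_of_adj, hadj u v⟩
  rw [Nat.card_eq_fintype_card, ← edgeFinset_card, card_edgeFinset_top_eq_card_choose_two] at h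
  exact lt_irrefl _ h

lemma le_tenacity_s6 {b : ℝ} (hcut : ∃ X, G.IsVertexCut X)
    (h : ∀ X, G.IsVertexCut X →
      b ≤ ((#X : ℝ) + (G.delVerts X).tauMax) / (G.delVerts X).omegaComp) :
    b ≤ G.tenacity :=
  le_csInf (hcut.elim fun X hX => ⟨_, X, hX, rfl⟩) fun _ ⟨X, hX, ht⟩ => ht ▸ h X hX

end Deletion

end SimpleGraph

lemma lt_add_of_choose_two_add_mul_lt {n k c τ m : ℕ}
    (hk : k.choose 2 + (n - k) * (k - 1) < m)
    (hm : 2 * m ≤ c * (n - 1) + (n - c) * (c + τ - 1)) (hτ : 1 ≤ τ) (hkn : k ≤ n) :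
    k < c + τ := by
  by_contra! hs
  -- the bound on `2m` is largest at `c = k - 1`, `c + τ = k`, where it is `k(k - 1) + 2(n - k)(k - 1)`
  obtain ⟨j, rfl⟩ : ∃ j, k = j + 1 := Nat.exists_eq_add_of_le' (by omega)
  have hchoose : (j + 1).choose 2 * 2 = (j + 1) * j := by
    simpa using (Nat.add_one_mul_choose_eq j 1).symm
  have hc : c ≤ j := by omega
  rw [Nat.add_sub_cancel] at hk
  have hcn : c ≤ n := by omega
  have hn : 1 ≤ n := by omega
  have hcτ : 1 ≤ c + τ := by omega
  zify [hkn, hcn, hn, hcτ] at hk hm hchoose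
  nlinarith [mul_le_mul_of_nonneg_left (by omega : (c : ℤ) + τ - 1 ≤ j) (by omega : (0 : ℤ) ≤ n - c),
    mul_nonneg (by omega : (0 : ℤ) ≤ j - c) (by omega : (0 : ℤ) ≤ n - (j + 1))]

lemma add_one_div_sub_le_div {n k s ω : ℕ} (hks : k + 1 ≤ s) (hω : 0 < ω)
    (hsω : s + ω ≤ n + 1) : ((k : ℝ) + 1) / (n - k) ≤ s / ω := by
  have hks' : (k : ℝ) + 1 ≤ s := by exact_mod_cast hks
  have hsω' : (s : ℝ) + ω ≤ n + 1 := by exact_mod_cast hsω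
  have hω' : (1 : ℝ) ≤ ω := by exact_mod_cast hω
  rw [div_le_div_iff₀ (by linarith) (by exact_mod_cast hω)]
  nlinarith [mul_le_mul_of_nonneg_left (show (ω : ℝ) ≤ n + 1 - s by linarith)
    (show (0 : ℝ) ≤ k + 1 by positivity)]

theorem tenacity_lower_bound_general (n m k : ℕ) (h2 : m ≤ n.choose 2 - 1)
    (hk1 : k.choose 2 + (n - k) * (k - 1) < m)
    (G : SimpleGraph (Fin n)) (hGm : Nat.card G.edgeSet = m) :
    ((k : ℝ) + 1) / ((n : ℝ) - (k : ℝ)) ≤ G.tenacity := by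
  have hkn : k ≤ n := by
    by_contra! h
    have := Nat.choose_le_choose 2 h.le
    omega
  obtain ⟨u, v, huv, hadj⟩ :=
    G.exists_ne_not_adj_of_card_edgeSet_lt (by rw [Fintype.card_fin]; omega)
  refine G.le_tenacity_s6 ⟨_, G.isVertexCut_compl_pair huv hadj⟩ fun X hX => ?_
  have hτ := hX.one_le_tauMax
  have hsize := G.card_add_tauMax_add_omegaComp_le X
  have hedges := G.two_mul_card_edgeSet_le X
  rw [Fintype.card_fin] at hsize hedges
  rw [hGm] at hedges
  have := add_one_div_sub_le_div (lt_add_of_choose_two_add_mul_lt hk1 hedges hτ hkn)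
    (Nat.zero_lt_of_lt hX) (by omega)
  rwa [Nat.cast_add] at this

theorem tenacity_lower_bound (n m k : ℕ) (h1 : n - 1 ≤ m) (h2 : m ≤ n.choose 2 - 1)
    (hk1 : k.choose 2 + (n - k) * (k - 1) < m)
    (hk2 : m ≤ k.choose 2 + (n - k) * k)
    (G : SimpleGraph (Fin n)) (hG : G.Connected) (hGm : Nat.card G.edgeSet = m) :
    ((k : ℝ) + 1) / ((n : ℝ) - (k : ℝ)) ≤ G.tenacity :=
  tenacity_lower_bound_general n m k h2 hk1 G hGm
end

section
/- If G is a tree on an odd number n of vertices containing a vertex of degree at least 4, or containing two nonadjacent vertices each of degree 3, then T(G) < 1. -/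
open SimpleGraph

/-!
If `X` is the complement of a family `B` of blocks of one or two vertices, no two blocks sharing
or joining a vertex, then `G - X` has at least `#B` components, all of order at most two; so
`T(G) < 1` as soon as the weight `|⋃ B| + #B` is at least `n + 3`.

In a tree, every vertex set `t` carries blocks of weight at least `2|t| - e(t)`, where `e(t)`
counts the edges inside `t`: a vertex of `t` farthest from a root has at most one neighbour in
`t`, and adding it back to the blocks of the rest gains `2` minus that number. For `t = V ∖ S`
with `S` independent this is `n + 1 + ∑_{v ∈ S} (deg v - 2)`, at least `n + 3` when `S` is a
vertex of degree at least four or two non-adjacent vertices of degree three.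
-/

open Finset

namespace SimpleGraph

section Labelling

variable {W ι : Type*} {H : SimpleGraph W} {f : W → ι}

lemma Walk.apply_eq_of_forall_adj (hf : ∀ ⦃v w⦄, H.Adj v w → f v = f w) {v w : W}
    (p : H.Walk v w) : f v = f w := by
  induction p with
  | nil => rfl
  | cons hadj _ ih => exact (hf hadj).trans ih

def componentLabel (hf : ∀ ⦃v w⦄, H.Adj v w → f v = f w) : H.ConnectedComponent → ι :=
  ConnectedComponent.lift f fun _ _ p _ => Walk.apply_eq_of_forall_adj hf p

lemma card_range_le_omegaComp [Finite W] (hf : ∀ ⦃v w⦄, H.Adj v w → f v = f w) :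
    Nat.card (Set.range f) ≤ H.omegaComp := by
  have hsub : Set.range f ⊆ Set.range (componentLabel hf) := by
    rintro _ ⟨v, rfl⟩
    exact ⟨H.connectedComponentMk v, rfl⟩
  exact (Nat.card_mono (Set.finite_range _) hsub).trans (Finite.card_range_le _)

lemma tauMax_le_of_card_fiber_le [Finite W] (hf : ∀ ⦃v w⦄, H.Adj v w → f v = f w) {m : ℕ}
    (hm : ∀ v, Nat.card {w // f w = f v} ≤ m) : H.tauMax ≤ m := by
  refine csSup_le' ?_
  rintro _ ⟨c, rfl⟩
  obtain ⟨v, rfl⟩ := c.exists_rep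
  refine le_trans (Nat.card_le_card_of_injective
    (fun w => ⟨w.1, congrArg (componentLabel hf) w.2⟩) fun w w' h => ?_) (hm v)
  exact Subtype.ext (Subtype.mk.inj h)

end Labelling

variable {V : Type*} {G : SimpleGraph V}

lemma tenacity_lt_one_of_card_add_tauMax_lt [Fintype V] {X : Finset V} (hX : G.IsVertexCut X)
    (h : #X + (G.delVerts X).tauMax < (G.delVerts X).omegaComp) : G.tenacity < 1 := by
  have hω : (0 : ℝ) < (G.delVerts X).omegaComp := by
    have : 1 < (G.delVerts X).omegaComp := hX
    exact_mod_cast zero_lt_one.trans this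
  unfold tenacity
  calc sInf _ ≤ (#X + (G.delVerts X).tauMax : ℝ) / (G.delVerts X).omegaComp :=
        csInf_le ⟨0, by rintro _ ⟨Y, -, rfl⟩; positivity⟩ (by exact ⟨X, hX, rfl⟩)
    _ < 1 := (div_lt_one hω).2 (by exact_mod_cast h)

/-- Deleting all vertices outside the blocks leaves a graph whose components each lie inside a
block: at least `#B` components, each of order at most two. -/
structure IsBlockFamily (G : SimpleGraph V) (s : Finset V) (B : Finset (Finset V)) : Prop where
  subset : ∀ b ∈ B, b ⊆ s
  nonempty : ∀ b ∈ B, b.Nonempty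
  card_le_two : ∀ b ∈ B, #b ≤ 2
  eq_of_eq_or_adj : ∀ b ∈ B, ∀ b' ∈ B, ∀ x ∈ b, ∀ y ∈ b', x = y ∨ G.Adj x y → b = b'

/-- Equals `#(B.biUnion id) + #B` for a block family: the vertices kept plus the blocks. -/
def blockWeight (B : Finset (Finset V)) : ℕ := ∑ b ∈ B, (#b + 1)

lemma isBlockFamily_empty (s : Finset V) : IsBlockFamily G s ∅ :=
  ⟨by simp, by simp, by simp, by simp⟩

namespace IsBlockFamily

variable {s t : Finset V} {B B' : Finset (Finset V)}

lemma mono (hB : IsBlockFamily G s B) (hst : s ⊆ t) : IsBlockFamily G t B :=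
  ⟨fun b hb => (hB.subset b hb).trans hst, hB.nonempty, hB.card_le_two, hB.eq_of_eq_or_adj⟩

lemma anti (hB : IsBlockFamily G s B) (h : B' ⊆ B) : IsBlockFamily G s B' :=
  ⟨fun b hb => hB.subset b (h hb), fun b hb => hB.nonempty b (h hb),
    fun b hb => hB.card_le_two b (h hb),
    fun b hb b' hb' => hB.eq_of_eq_or_adj b (h hb) b' (h hb')⟩

variable [DecidableEq V]

lemma insert_block (hB : IsBlockFamily G s B) {c : Finset V} (hcs : c ⊆ s) (hc : c.Nonempty)
    (hc2 : #c ≤ 2) (hsep : ∀ b ∈ B, ∀ x ∈ c, ∀ y ∈ b, ¬(x = y ∨ G.Adj x y)) :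
    IsBlockFamily G s (insert c B) ∧ blockWeight (insert c B) = blockWeight B + #c + 1 := by
  have hcB : c ∉ B := fun hcB => by
    obtain ⟨x, hx⟩ := hc
    exact hsep c hcB x hx x hx (Or.inl rfl)
  refine ⟨⟨?_, ?_, ?_, ?_⟩, by rw [blockWeight, sum_insert hcB, blockWeight]; ring⟩
  · simpa [hcs] using hB.subset
  · simpa [hc] using hB.nonempty
  · simpa [hc2] using hB.card_le_two
  · simp only [mem_insert]
    rintro b (rfl | hb) b' (rfl | hb') x hx y hy hxy
    · rfl
    · exact absurd hxy (hsep b' hb' x hx y hy)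
    · exact absurd (hxy.imp Eq.symm Adj.symm) (hsep b hb y hy x hx)
    · exact hB.eq_of_eq_or_adj b hb b' hb' x hx y hy hxy

/-- Either `b₀ = {w}` grows to `{u, w}`, or `w` leaves `b₀` and `{u}` becomes a new block. -/
lemma exists_insert_vertex_of_adj (hB : IsBlockFamily G s B) {u w : V} {b₀ : Finset V}
    (hu : u ∉ s) (hb₀ : b₀ ∈ B) (hw : w ∈ b₀) (hN : ∀ y ∈ s, G.Adj u y → y = w) :
    ∃ B', IsBlockFamily G (insert u s) B' ∧ blockWeight B + 1 ≤ blockWeight B' := by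
  have hus : ∀ b ∈ B, ∀ y ∈ b, u ≠ y := fun b hb y hy h => hu (h ▸ hB.subset b hb hy)
  have hsep : ∀ b ∈ B.erase b₀, ∀ y ∈ b, ¬(u = y ∨ G.Adj u y) := by
    intro b hb y hy
    have hbB := mem_of_mem_erase hb
    refine not_or_intro (hus b hbB y hy) fun huy => ne_of_mem_erase hb ?_
    exact hB.eq_of_eq_or_adj b hbB b₀ hb₀ y hy w hw (Or.inl (hN y (hB.subset b hbB hy) huy))
  have hsep₀ : ∀ b ∈ B.erase b₀, ∀ x ∈ b₀, ∀ y ∈ b, ¬(x = y ∨ G.Adj x y) :=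
    fun b hb x hx y hy h => ne_of_mem_erase hb
      (hB.eq_of_eq_or_adj b₀ hb₀ b (mem_of_mem_erase hb) x hx y hy h).symm
  have hW₀ : blockWeight (B.erase b₀) + (#b₀ + 1) = blockWeight B := sum_erase_add B _ hb₀
  have hB₀ := (hB.mono (subset_insert u s)).anti (erase_subset b₀ B)
  rcases (hB.card_le_two b₀ hb₀).lt_or_eq with hlt | htwo
  · obtain rfl : b₀ = {w} :=
      eq_singleton_iff_unique_mem.2 ⟨hw, fun x hx => card_le_one.1 (by omega) x hx w hw⟩
    obtain ⟨hB', hW⟩ := hB₀.insert_block (c := {u, w})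
      (insert_subset_insert u (singleton_subset_iff.2 (hB.subset _ hb₀ hw))) (by simp)
      Finset.card_le_two fun b hb x hx y hy => by
        rcases mem_insert.1 hx with rfl | hx
        · exact hsep b hb y hy
        · exact hsep₀ b hb x hx y hy
    refine ⟨_, hB', ?_⟩
    rw [hW, card_pair (hus _ hb₀ w hw)]
    rw [card_singleton] at hW₀
    omega
  · have hc : #(b₀.erase w) = 1 := by rw [card_erase_of_mem hw, htwo]
    obtain ⟨hB₁, hW₁⟩ := hB₀.insert_block (c := b₀.erase w)
      ((erase_subset w b₀).trans ((hB.subset b₀ hb₀).trans (subset_insert u s)))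
      (card_pos.1 (by omega)) (by omega)
      fun b hb x hx y hy => hsep₀ b hb x (mem_of_mem_erase hx) y hy
    obtain ⟨hB', hW⟩ := hB₁.insert_block (c := {u}) (by simp) (by simp) (by simp)
      fun b hb x hx y hy => by
        rw [mem_singleton.1 hx]
        rcases mem_insert.1 hb with rfl | hb
        · refine not_or_intro (hus b₀ hb₀ y (mem_of_mem_erase hy)) fun huy => ?_
          exact ne_of_mem_erase hy (hN y (hB.subset b₀ hb₀ (mem_of_mem_erase hy)) huy)
        · exact hsep b hb y hy
    refine ⟨_, hB', ?_⟩
    rw [hW, hW₁, hc, card_singleton]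
    omega

lemma exists_insert_vertex [DecidableRel G.Adj] (hB : IsBlockFamily G s B) {u : V} (hu : u ∉ s)
    (hN : ∀ y ∈ s, ∀ y' ∈ s, G.Adj u y → G.Adj u y' → y = y') :
    ∃ B', IsBlockFamily G (insert u s) B' ∧
      blockWeight B + 2 ≤ blockWeight B' + #{y ∈ s | G.Adj u y} := by
  by_cases hA : ∃ b ∈ B, ∃ w ∈ b, G.Adj u w
  · obtain ⟨b₀, hb₀, w, hw, huw⟩ := hA
    have hws : w ∈ s := hB.subset b₀ hb₀ hw
    have hk : 1 ≤ #{y ∈ s | G.Adj u y} := card_pos.2 ⟨w, by simp [hws, huw]⟩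
    obtain ⟨B', hB', hW⟩ := hB.exists_insert_vertex_of_adj hu hb₀ hw
      fun y hy huy => hN y hy w hws huy huw
    exact ⟨B', hB', by omega⟩
  push Not at hA
  obtain ⟨hB', hW⟩ := (hB.mono (subset_insert u s)).insert_block (c := {u}) (by simp) (by simp)
    (by simp) fun b hb x hx y hy => by
      rw [mem_singleton.1 hx]
      exact not_or_intro (fun h => hu (h ▸ hB.subset b hb hy)) (hA b hb y hy)
  exact ⟨_, hB', by simp [hW]⟩

end IsBlockFamily

def edgesWithin (G : SimpleGraph V) [DecidableRel G.Adj] (t : Finset V) : ℕ :=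
  #{e ∈ t.sym2 | e ∈ G.edgeSet}

lemma edgesWithin_insert [DecidableEq V] [DecidableRel G.Adj] {t : Finset V} {u : V}
    (hu : u ∉ t) :
    G.edgesWithin (insert u t) = G.edgesWithin t + #{y ∈ t | G.Adj u y} := by
  rw [edgesWithin, ← cons_eq_insert _ _ hu, sym2_cons, filter_disjUnion, card_disjUnion,
    filter_map, card_map, filter_cons, add_comm, edgesWithin]
  simp

lemma edgesWithin_univ [Fintype V] [DecidableRel G.Adj] :
    G.edgesWithin univ = #G.edgeFinset := by
  rw [edgesWithin]
  congr 1
  ext e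
  simp

lemma IsTree.eq_of_adj_of_dist_add_one (hG : G.IsTree) {r u y y' : V} (hy : G.Adj y u)
    (hy' : G.Adj y' u) (h : G.dist r y + 1 = G.dist r u) (h' : G.dist r y' + 1 = G.dist r u) :
    y = y' := by
  obtain ⟨p, hp⟩ := hG.connected.exists_walk_length_eq_dist r y
  obtain ⟨p', hp'⟩ := hG.connected.exists_walk_length_eq_dist r y'
  have hq := (p.concat hy).isPath_of_length_eq_dist (by rw [Walk.length_concat, hp, h])
  have hq' := (p'.concat hy').isPath_of_length_eq_dist (by rw [Walk.length_concat, hp', h'])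
  exact (Walk.concat_inj ((hG.existsUnique_path r u).unique hq hq')).1

/-- Take a vertex of `t` farthest from a root: its only possible neighbour in `t` is its parent. -/
lemma IsTree.exists_mem_forall_adj_eq (hG : G.IsTree) {t : Finset V} (ht : t.Nonempty) :
    ∃ u ∈ t, ∀ y ∈ t, ∀ y' ∈ t, G.Adj u y → G.Adj u y' → y = y' := by
  obtain ⟨r⟩ := hG.connected.nonempty
  obtain ⟨u, hu, hmax⟩ := t.exists_max_image (G.dist r) ht
  have hparent : ∀ y ∈ t, G.Adj u y → G.dist r y + 1 = G.dist r u := fun y hy huy =>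
    ((hG.dist_eq_dist_add_one_of_adj r huy).resolve_right fun h => by
      have := hmax y hy; omega).symm
  exact ⟨u, hu, fun y hy y' hy' huy huy' => hG.eq_of_adj_of_dist_add_one huy.symm huy'.symm
    (hparent y hy huy) (hparent y' hy' huy')⟩

lemma IsTree.exists_isBlockFamily [DecidableEq V] [DecidableRel G.Adj] (hG : G.IsTree)
    (t : Finset V) : ∃ B, IsBlockFamily G t B ∧ 2 * #t ≤ blockWeight B + G.edgesWithin t := by
  induction t using Finset.strongInduction with
  | H t ih =>
  rcases t.eq_empty_or_nonempty with rfl | ht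
  · exact ⟨∅, isBlockFamily_empty ∅, by simp⟩
  obtain ⟨u, hu, hleaf⟩ := hG.exists_mem_forall_adj_eq ht
  obtain ⟨B, hB, hW⟩ := ih (t.erase u) (erase_ssubset hu)
  obtain ⟨B', hB', hW'⟩ := hB.exists_insert_vertex (notMem_erase u t)
    fun y hy y' hy' => hleaf y (mem_of_mem_erase hy) y' (mem_of_mem_erase hy')
  rw [insert_erase hu] at hB'
  have he := edgesWithin_insert (G := G) (notMem_erase u t)
  rw [insert_erase hu] at he
  have := card_erase_add_one hu
  exact ⟨B', hB', by omega⟩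

lemma edgesWithin_compl_add_sum_degree [Fintype V] [DecidableEq V] [DecidableRel G.Adj]
    {S : Finset V} (hS : G.IsIndepSet S) :
    G.edgesWithin Sᶜ + ∑ v ∈ S, G.degree v = G.edgesWithin univ := by
  induction S using Finset.induction_on with
  | empty => simp
  | insert a S haS ih =>
  rw [coe_insert, isIndepSet_iff, Set.pairwise_insert] at hS
  have hnbr : {y ∈ Sᶜ.erase a | G.Adj a y} = G.neighborFinset a := by
    ext y
    simp only [mem_filter, mem_erase, mem_compl, mem_neighborFinset]
    refine ⟨fun h => h.2, fun h => ⟨⟨h.ne.symm, fun hy => ?_⟩, h⟩⟩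
    exact (hS.2 y hy h.ne).1 h
  have he := edgesWithin_insert (G := G) (notMem_erase a Sᶜ)
  rw [insert_erase (mem_compl.2 haS), hnbr, card_neighborFinset_eq_degree] at he
  rw [compl_insert, sum_insert haS, ← ih hS.1, he]
  ring

lemma IsBlockFamily.tenacity_lt_one [Fintype V] {B : Finset (Finset V)}
    (hB : IsBlockFamily G univ B) (hW : Fintype.card V + 3 ≤ blockWeight B) : G.tenacity < 1 := by
  classical
  set D := B.biUnion id
  have hDB : #D + #B = blockWeight B := by
    rw [card_biUnion (t := id) fun b hb b' hb' hne => Finset.disjoint_left.2 fun x hx hx' =>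
      hne (hB.eq_of_eq_or_adj b hb b' hb' x hx x hx' (Or.inl rfl))]
    simp [blockWeight, sum_add_distrib]
  have hmem : ∀ v : {v // v ∉ Dᶜ}, ∃ b ∈ B, (v : V) ∈ b := fun v => by simpa [D] using v.2
  choose f hfB hvf using hmem
  have hf : ∀ ⦃v w⦄, (G.delVerts Dᶜ).Adj v w → f v = f w := fun v w h =>
    hB.eq_of_eq_or_adj _ (hfB v) _ (hfB w) _ (hvf v) _ (hvf w) (Or.inr h)
  have hrange : Set.range f = B := by
    ext b
    refine ⟨by rintro ⟨v, rfl⟩; exact hfB v, fun hb => ?_⟩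
    obtain ⟨x, hx⟩ := hB.nonempty b hb
    have hxD : x ∉ Dᶜ := by simpa [D] using ⟨b, hb, hx⟩
    exact ⟨⟨x, hxD⟩, hB.eq_of_eq_or_adj _ (hfB _) b hb x (hvf _) x hx (Or.inl rfl)⟩
  have hfiber : ∀ v, Nat.card {w // f w = f v} ≤ 2 := fun v =>
    calc Nat.card {w // f w = f v}
      _ ≤ Nat.card (f v) :=
        Nat.card_le_card_of_injective (fun w => ⟨w.1.1, by have := hvf w.1; rwa [w.2] at this⟩)
          fun w w' h => Subtype.ext (Subtype.ext (Subtype.mk.inj h))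
      _ ≤ 2 := by rw [Nat.card_eq_finsetCard]; exact hB.card_le_two _ (hfB v)
  have hω := card_range_le_omegaComp hf
  rw [hrange, Nat.card_coe_set_eq, Set.ncard_coe_finset] at hω
  have hτ := tauMax_le_of_card_fiber_le hf hfiber
  have hX := card_compl_add_card D
  have hD := card_le_univ D
  exact tenacity_lt_one_of_card_add_tauMax_lt (X := Dᶜ) (show 1 < _ by omega) (by omega)

lemma IsTree.tenacity_lt_one_of_isIndepSet [Fintype V] [DecidableRel G.Adj] (hG : G.IsTree)
    {S : Finset V} (hS : G.IsIndepSet S) (hdeg : 2 * #S + 2 ≤ ∑ v ∈ S, G.degree v) :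
    G.tenacity < 1 := by
  classical
  obtain ⟨B, hB, hW⟩ := hG.exists_isBlockFamily Sᶜ
  have he := edgesWithin_compl_add_sum_degree hS
  have hn := hG.card_edgeFinset
  rw [edgesWithin_univ] at he
  have hc := card_compl_add_card S
  exact (hB.mono (subset_univ _)).tenacity_lt_one (by omega)

end SimpleGraph

theorem tree_odd_bad_degrees_general (n : ℕ)
    (G : SimpleGraph (Fin n)) (hT : G.IsTree)
    (h : (∃ v, 4 ≤ G.deg v) ∨
      (∃ u v, u ≠ v ∧ ¬ G.Adj u v ∧ G.deg u = 3 ∧ G.deg v = 3)) :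
    G.tenacity < 1 := by
  classical
  have hdeg : ∀ v, G.deg v = G.degree v := fun v => by
    rw [deg, Nat.card_eq_fintype_card, card_neighborSet_eq_degree]
  rcases h with ⟨v, hv⟩ | ⟨u, v, huv, hadj, hu, hv⟩
  · exact hT.tenacity_lt_one_of_isIndepSet (S := {v}) (by simp) (by simpa [← hdeg])
  · refine hT.tenacity_lt_one_of_isIndepSet (S := {u, v}) ?_ ?_
    · rw [Finset.coe_pair, isIndepSet_iff, Set.pairwise_pair]
      exact fun _ => ⟨hadj, fun h => hadj h.symm⟩
    · rw [Finset.sum_pair huv, Finset.card_pair huv, ← hdeg, ← hdeg, hu, hv]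

theorem tree_odd_bad_degrees (n : ℕ) (hodd : Odd n) (hn : 3 ≤ n)
    (G : SimpleGraph (Fin n)) (hT : G.IsTree)
    (h : (∃ v, 4 ≤ G.deg v) ∨
      (∃ u v, u ≠ v ∧ ¬ G.Adj u v ∧ G.deg u = 3 ∧ G.deg v = 3)) :
    G.tenacity < 1 :=
  tree_odd_bad_degrees_general n G hT h
end

section
/- If G is a unicyclic graph on n vertices containing a vertex of degree at least 4, then T(G) ≤ 1. -/
open SimpleGraph

/-!
Start from a vertex `v` of degree at least four and keep deleting vertices of degree at least two.
Each deletion removes at least two edges (the first at least four), so the potential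
`e(G - X) + 2|X|` never grows and ends at most `e(G) - 2 = n - 2`. What remains has maximum
degree at most one: its components have at most two vertices, and there are at least
`(n - |X|) - e(G - X)` of them. Hence `ω(G - X) ≥ |X| + 2 ≥ |X| + τ(G - X)`.
-/

namespace SimpleGraph

variable {V : Type*}

def delVertsSingletonIsoInduce (G : SimpleGraph V) (w : V) :
    G.delVerts {w} ≃g G.induce {w}ᶜ where
  toEquiv := Equiv.subtypeEquivRight fun v => by simp
  map_rel_iff' := Iff.rfl

lemma card_edgeSet_delVerts_singleton_add_deg [Finite V] (G : SimpleGraph V) (w : V) :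
    Nat.card (G.delVerts {w}).edgeSet + G.deg w = Nat.card G.edgeSet := by
  classical
  have := Fintype.ofFinite V
  rw [Nat.card_congr (G.delVertsSingletonIsoInduce w).mapEdgeSet, deg, Nat.card_eq_fintype_card,
    Nat.card_eq_fintype_card, Nat.card_eq_fintype_card, card_neighborSet_eq_degree,
    ← edgeFinset_card, ← edgeFinset_card, card_edgeFinset_induce_compl_singleton,
    card_edgeFinset_deleteIncidenceSet]
  have := G.degree_le_card_edgeFinset w
  omega

def delVertsInsertIso [DecidableEq V] (G : SimpleGraph V) {X : Finset V} {w : V} (hw : w ∉ X) :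
    G.delVerts (insert w X) ≃g (G.delVerts X).delVerts {⟨w, hw⟩} where
  toFun v := ⟨⟨v, fun h => v.2 (Finset.mem_insert_of_mem h)⟩, fun h =>
    v.2 (Finset.mem_insert.mpr (.inl (congrArg Subtype.val (Finset.mem_singleton.mp h))))⟩
  invFun v := ⟨v.1, by
    simp only [Finset.mem_insert, not_or]
    exact ⟨fun h => v.2 (Finset.mem_singleton.mpr (Subtype.ext h)), v.1.2⟩⟩
  map_rel_iff' := Iff.rfl

lemma card_edgeSet_delVerts_insert_add_deg [Finite V] [DecidableEq V] (G : SimpleGraph V)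
    {X : Finset V} {w : V} (hw : w ∉ X) :
    Nat.card (G.delVerts (insert w X)).edgeSet + (G.delVerts X).deg ⟨w, hw⟩ =
      Nat.card (G.delVerts X).edgeSet := by
  rw [Nat.card_congr (G.delVertsInsertIso hw).mapEdgeSet,
    card_edgeSet_delVerts_singleton_add_deg]

section MaxDegreeOne

variable [Finite V] {G : SimpleGraph V}

lemma Reachable.eq_or_adj_of_deg_le_one (hG : ∀ v, G.deg v ≤ 1) {u v : V}
    (h : G.Reachable u v) : u = v ∨ G.Adj u v := by
  obtain ⟨p⟩ := h
  induction p with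
  | nil => exact .inl rfl
  | @cons a b c hab _ ih =>
    rcases ih with rfl | hbc
    · exact .inr hab
    · have : Subsingleton (G.neighborSet b) := Finite.card_le_one_iff_subsingleton.mp (hG b)
      exact .inl (congrArg Subtype.val
        (Subsingleton.elim (⟨a, hab.symm⟩ : G.neighborSet b) ⟨c, hbc⟩))

lemma tauMax_le_two_of_deg_le_one (hG : ∀ v, G.deg v ≤ 1) : G.tauMax ≤ 2 := by
  refine csSup_le' ?_
  rintro _ ⟨c, rfl⟩
  induction c using ConnectedComponent.ind with | _ r => ?_
  have hsub : {v | G.connectedComponentMk v = G.connectedComponentMk r} ⊆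
      insert r (G.neighborSet r) := fun v hv =>
    ((ConnectedComponent.exact hv).symm.eq_or_adj_of_deg_le_one hG).imp Eq.symm id
  calc Nat.card {v // G.connectedComponentMk v = G.connectedComponentMk r}
      ≤ (insert r (G.neighborSet r)).ncard := Nat.card_mono (Set.toFinite _) hsub
    _ ≤ (G.neighborSet r).ncard + 1 := Set.ncard_insert_le _ _
    _ ≤ 2 := by have := hG r; rw [deg, Nat.card_coe_set_eq] at this; omega

lemma card_le_omegaComp_add_card_edgeSet_of_deg_le_one (hG : ∀ v, G.deg v ≤ 1) :
    Nat.card V ≤ G.omegaComp + Nat.card G.edgeSet := by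
  classical
  let rep (c : G.ConnectedComponent) : V := Quot.out c
  have mk_rep (c : G.ConnectedComponent) : G.connectedComponentMk (rep c) = c := Quot.out_eq c
  have adj_rep (v : V) (hv : v ≠ rep (G.connectedComponentMk v)) :
      G.Adj v (rep (G.connectedComponentMk v)) :=
    ((ConnectedComponent.exact (mk_rep _).symm).eq_or_adj_of_deg_le_one hG).resolve_left hv
  -- a vertex other than the representative of its component is matched to that representative
  let f (v : V) : G.ConnectedComponent ⊕ G.edgeSet :=
    if hv : v = rep (G.connectedComponentMk v) then .inl (G.connectedComponentMk v)
    else .inr ⟨s(v, rep (G.connectedComponentMk v)), adj_rep v hv⟩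
  have hf : f.Injective := by
    intro v w hvw
    by_cases hv : v = rep (G.connectedComponentMk v) <;>
      by_cases hw : w = rep (G.connectedComponentMk w)
    · simp only [f, dif_pos hv, dif_pos hw, Sum.inl.injEq] at hvw
      rw [hv, hw, hvw]
    · simp [f, dif_pos hv, dif_neg hw] at hvw
    · simp [f, dif_neg hv, dif_pos hw] at hvw
    · simp only [f, dif_neg hv, dif_neg hw, Sum.inr.injEq] at hvw
      rcases Sym2.eq_iff.mp (Subtype.ext_iff.mp hvw) with ⟨h, -⟩ | ⟨hv', hw'⟩
      · exact h
      · have : G.connectedComponentMk v = G.connectedComponentMk w := by rw [hv', mk_rep]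
        exact (hw (by rw [← this]; exact hw'.symm)).elim
  simpa [omegaComp, Nat.card_sum] using Nat.card_le_card_of_injective f hf

end MaxDegreeOne

section Greedy

variable [Fintype V] [DecidableEq V]

lemma exists_delVerts_deg_le_one (G : SimpleGraph V) (X₀ : Finset V) :
    ∃ X : Finset V, (∀ w, (G.delVerts X).deg w ≤ 1) ∧
      Nat.card (G.delVerts X).edgeSet + 2 * X.card ≤
        Nat.card (G.delVerts X₀).edgeSet + 2 * X₀.card := by
  -- take `X` of maximal size within the bound: deleting one more vertex of degree at least two
  -- would not increase the potential
  obtain ⟨X, hX, hmax⟩ := Finset.exists_max_image (Finset.univ.filter fun X =>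
      Nat.card (G.delVerts X).edgeSet + 2 * X.card ≤
        Nat.card (G.delVerts X₀).edgeSet + 2 * X₀.card) Finset.card
    ⟨X₀, Finset.mem_filter.mpr ⟨Finset.mem_univ _, le_rfl⟩⟩
  refine ⟨X, fun ⟨w, hw⟩ => ?_, (Finset.mem_filter.mp hX).2⟩
  by_contra! hdeg
  have hsplit := G.card_edgeSet_delVerts_insert_add_deg hw
  have hcard := Finset.card_insert_of_notMem hw
  have := hmax (insert w X) <| by
    simp only [Finset.mem_filter, Finset.mem_univ, true_and] at hX ⊢
    omega
  omega

lemma exists_delVerts_tauMax_le_two (G : SimpleGraph V) (X₀ : Finset V) :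
    ∃ X : Finset V, (G.delVerts X).tauMax ≤ 2 ∧ Fintype.card V + X.card ≤
      (G.delVerts X).omegaComp + Nat.card (G.delVerts X₀).edgeSet + 2 * X₀.card := by
  obtain ⟨X, hdeg, hX⟩ := G.exists_delVerts_deg_le_one X₀
  refine ⟨X, tauMax_le_two_of_deg_le_one hdeg, ?_⟩
  have hV := card_le_omegaComp_add_card_edgeSet_of_deg_le_one hdeg
  have hcompl : Nat.card {v // v ∉ X} + X.card = Fintype.card V := by
    simp [Nat.card_eq_fintype_card, Fintype.card_subtype_compl, Finset.card_le_univ]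
  omega

end Greedy

lemma tenacity_le [Fintype V] (G : SimpleGraph V) {X : Finset V} (hX : G.IsVertexCut X) :
    G.tenacity ≤ ((X.card : ℝ) + (G.delVerts X).tauMax) / (G.delVerts X).omegaComp := by
  refine csInf_le ⟨0, ?_⟩ ⟨X, hX, rfl⟩
  rintro _ ⟨Y, -, rfl⟩
  positivity

end SimpleGraph

theorem unicyclic_degree_four (n : ℕ) (G : SimpleGraph (Fin n))
    (hG : G.Unicyclic) (h : ∃ v, 4 ≤ G.deg v) :
    G.tenacity ≤ 1 := by
  obtain ⟨v, hv⟩ := h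
  obtain ⟨X, hτ, hX⟩ := G.exists_delVerts_tauMax_le_two {v}
  have hsplit := G.card_edgeSet_delVerts_singleton_add_deg v
  have hE : Nat.card G.edgeSet = Fintype.card (Fin n) := hG.2
  have hω : X.card + 2 ≤ (G.delVerts X).omegaComp := by
    rw [Finset.card_singleton] at hX; omega
  calc G.tenacity ≤ ((X.card : ℝ) + (G.delVerts X).tauMax) / (G.delVerts X).omegaComp :=
        G.tenacity_le (show 1 < _ by omega)
    _ ≤ 1 := by
        rw [div_le_one (by exact_mod_cast (show 0 < (G.delVerts X).omegaComp by omega))]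
        exact_mod_cast (show X.card + (G.delVerts X).tauMax ≤ _ by omega)
end

section
/- If G is a unicyclic graph containing two nonadjacent vertices of degree 3, then T(G) ≤ 1. -/
open SimpleGraph

/-!
Delete `u` and `v`, and then greedily any vertex with at least two remaining neighbours, until
`G - X` has maximum degree at most one, so that its components have at most two vertices.
Every deleted vertex destroys at least two edges, and `u`, `v` destroy three each (disjointly, as
they are nonadjacent), so `|E(G - X)| ≤ |E(G)| - 2|X| - 2 = |V| - 2|X| - 2`. Since a graph has at
least `|V| - |E|` components, `ω(G - X) ≥ |X| + 2 ≥ |X| + τ(G - X)`.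
-/

namespace SimpleGraph

open Finset

section MaxDegreeOne

variable {W : Type*} {H : SimpleGraph W}

theorem Reachable.eq_or_adj_of_subsingleton (hH : ∀ x, (H.neighborSet x).Subsingleton)
    {x y : W} (h : H.Reachable x y) : x = y ∨ H.Adj x y := by
  obtain ⟨p⟩ := h
  induction p with
  | nil => exact Or.inl rfl
  | cons hadj _ ih =>
    rcases ih with rfl | hbc
    · exact Or.inr hadj
    · exact Or.inl (hH _ hadj.symm hbc)

theorem card_connectedComponentMk_le_two [Finite W]
    (hH : ∀ x, (H.neighborSet x).Subsingleton) (c : H.ConnectedComponent) :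
    Nat.card {v : W // H.connectedComponentMk v = c} ≤ 2 := by
  obtain ⟨r, rfl⟩ := c.exists_rep
  have hsupp : {v | H.connectedComponentMk v = H.connectedComponentMk r} ⊆
      insert r (H.neighborSet r) := fun v hv =>
    (ConnectedComponent.exact hv).symm.eq_or_adj_of_subsingleton hH |>.imp Eq.symm id
  calc Nat.card {v : W // H.connectedComponentMk v = H.connectedComponentMk r}
      ≤ (insert r (H.neighborSet r)).ncard := Set.ncard_le_ncard hsupp
    _ ≤ (H.neighborSet r).ncard + 1 := Set.ncard_insert_le _ _
    _ ≤ 2 := by have := Set.ncard_le_one_iff_subsingleton.mpr (hH r); omega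

theorem tauMax_le_two [Finite W] (hH : ∀ x, (H.neighborSet x).Subsingleton) :
    H.tauMax ≤ 2 :=
  csSup_le' <| Set.forall_mem_range.mpr (card_connectedComponentMk_le_two hH)

/-- Each vertex other than the chosen representative of its component is joined to that
representative by an edge, and distinct vertices get distinct edges. -/
theorem card_le_omegaComp_add_card_edgeSet [Finite W]
    (hH : ∀ x, (H.neighborSet x).Subsingleton) :
    Nat.card W ≤ H.omegaComp + Nat.card H.edgeSet := by
  classical
  have hrep (w : W) : H.connectedComponentMk (H.connectedComponentMk w).out =
      H.connectedComponentMk w :=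
    (H.connectedComponentMk w).out_eq
  let f (w : W) : H.ConnectedComponent ⊕ H.edgeSet :=
    if h : w = (H.connectedComponentMk w).out then .inl (H.connectedComponentMk w)
    else .inr ⟨s(w, (H.connectedComponentMk w).out),
      ((ConnectedComponent.exact (hrep w).symm).eq_or_adj_of_subsingleton hH).resolve_left h⟩
  have hf : Function.Injective f := by
    intro a b hab
    simp only [f] at hab
    split_ifs at hab with ha hb hb
    · rw [ha, hb, Sum.inl.inj hab]
    · obtain ⟨rfl, -⟩ | ⟨hab, -⟩ := Sym2.eq_iff.mp (congrArg Subtype.val (Sum.inr.inj hab))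
      · rfl
      · have : H.connectedComponentMk a = H.connectedComponentMk b := by rw [hab, hrep]
        exact absurd (this ▸ hab) ha
  calc Nat.card W ≤ Nat.card (H.ConnectedComponent ⊕ H.edgeSet) :=
        Nat.card_le_card_of_injective f hf
    _ = H.omegaComp + Nat.card H.edgeSet := Nat.card_sum

end MaxDegreeOne

theorem deg_eq_degree {V : Type*} (G : SimpleGraph V) (v : V) [Fintype (G.neighborSet v)] :
    G.deg v = G.degree v := by
  rw [deg, Nat.card_eq_fintype_card, card_neighborSet_eq_degree]

section EdgesAvoiding

variable {V : Type*} [Fintype V] [DecidableEq V] (G : SimpleGraph V) [DecidableRel G.Adj]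

def edgeFinsetAvoiding (X : Finset V) : Finset (Sym2 V) :=
  {e ∈ G.edgeFinset | ∀ x ∈ e, x ∉ X}

theorem card_edgeSet_delVerts_le (X : Finset V) :
    Nat.card (G.delVerts X).edgeSet ≤ #(G.edgeFinsetAvoiding X) := by
  have hmem (e : (G.delVerts X).edgeSet) : e.1.map Subtype.val ∈ G.edgeFinsetAvoiding X := by
    obtain ⟨e, he⟩ := e
    induction e using Sym2.ind with
    | h a b => simpa [edgeFinsetAvoiding] using ⟨he, a.2, b.2⟩
  calc Nat.card (G.delVerts X).edgeSet ≤ Nat.card (G.edgeFinsetAvoiding X) :=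
        Nat.card_le_card_of_injective (fun e => ⟨_, hmem e⟩) fun e₁ e₂ h =>
          Subtype.ext <| Sym2.map.injective Subtype.val_injective (congrArg Subtype.val h)
    _ = #(G.edgeFinsetAvoiding X) := Nat.card_eq_finsetCard _

theorem card_edgeFinsetAvoiding_insert {X : Finset V} {w : V} (hw : w ∉ X) :
    #(G.edgeFinsetAvoiding (insert w X)) + #(G.neighborFinset w \ X) =
      #(G.edgeFinsetAvoiding X) := by
  rw [← card_filter_add_card_filter_not (s := G.edgeFinsetAvoiding X) (fun e => w ∉ e)]
  congr 1
  · congr 1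
    ext e
    simp only [edgeFinsetAvoiding, mem_filter, mem_insert, not_or]
    grind
  · rw [← card_image_of_injective _ (fun a b h => (Sym2.congr_right (a := w)).mp h)]
    congr 1
    ext e
    induction e using Sym2.ind with
    | h a b =>
      simp only [mem_image, mem_sdiff, mem_neighborFinset, edgeFinsetAvoiding, mem_filter,
        mem_edgeFinset, mem_edgeSet, Sym2.mem_iff, Sym2.eq_iff, not_not]
      constructor
      · rintro ⟨y, ⟨hwy, hy⟩, ⟨rfl, rfl⟩ | ⟨rfl, rfl⟩⟩
        · exact ⟨⟨hwy, by grind⟩, Or.inl rfl⟩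
        · exact ⟨⟨hwy.symm, by grind⟩, Or.inr rfl⟩
      · rintro ⟨⟨hab, hX⟩, rfl | rfl⟩
        · exact ⟨b, ⟨hab, hX b (.inr rfl)⟩, .inl ⟨rfl, rfl⟩⟩
        · exact ⟨a, ⟨hab.symm, hX a (.inl rfl)⟩, .inr ⟨rfl, rfl⟩⟩

theorem exists_superset_card_neighborFinset_sdiff_le_one (U : Finset V) :
    ∃ X, U ⊆ X ∧ (∀ w ∉ X, #(G.neighborFinset w \ X) ≤ 1) ∧
      #(G.edgeFinsetAvoiding X) + 2 * #X ≤ #(G.edgeFinsetAvoiding U) + 2 * #U := by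
  by_cases hU : ∀ w ∉ U, #(G.neighborFinset w \ U) ≤ 1
  · exact ⟨U, subset_rfl, hU, le_rfl⟩
  push Not at hU
  obtain ⟨w, hwU, hw⟩ := hU
  obtain ⟨X, hwX, hX, hcard⟩ := exists_superset_card_neighborFinset_sdiff_le_one (insert w U)
  refine ⟨X, (subset_insert w U).trans hwX, hX, ?_⟩
  have := G.card_edgeFinsetAvoiding_insert hwU
  rw [card_insert_of_notMem hwU] at hcard
  omega
termination_by #Uᶜ
decreasing_by
  rw [compl_insert]
  exact card_erase_lt_of_mem (mem_compl.mpr hwU)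

theorem neighborSet_delVerts_subsingleton {X : Finset V}
    (hX : ∀ w ∉ X, #(G.neighborFinset w \ X) ≤ 1) (x : {v // v ∉ X}) :
    ((G.delVerts X).neighborSet x).Subsingleton := by
  intro a ha b hb
  have hmem (c : {v // v ∉ X}) (hc : c ∈ (G.delVerts X).neighborSet x) :
      c.1 ∈ G.neighborFinset x \ X :=
    mem_sdiff.mpr ⟨(G.mem_neighborFinset _ _).mpr hc, c.2⟩
  exact Subtype.ext <| card_le_one.mp (hX x x.2) _ (hmem a ha) _ (hmem b hb)

theorem card_edgeFinsetAvoiding_pair {u v : V} (huv : u ≠ v) (hnadj : ¬G.Adj u v) :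
    #(G.edgeFinsetAvoiding {u, v}) + G.degree u + G.degree v = #G.edgeFinset := by
  have hempty : G.edgeFinsetAvoiding ∅ = G.edgeFinset := by simp [edgeFinsetAvoiding]
  have hv := G.card_edgeFinsetAvoiding_insert (X := ∅) (notMem_empty v)
  have hu := G.card_edgeFinsetAvoiding_insert (mem_singleton.not.mpr huv)
  rw [insert_empty_eq, sdiff_empty, card_neighborFinset_eq_degree, hempty] at hv
  rw [sdiff_singleton_eq_erase, erase_eq_of_notMem (by simpa using hnadj),
    card_neighborFinset_eq_degree] at hu
  omega

theorem card_add_two_le_omegaComp_delVerts {X : Finset V}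
    (hX : ∀ w ∉ X, #(G.neighborFinset w \ X) ≤ 1)
    (hcard : #(G.edgeFinsetAvoiding X) + 2 * #X + 2 ≤ Fintype.card V) :
    #X + 2 ≤ (G.delVerts X).omegaComp := by
  have hcomp := card_le_omegaComp_add_card_edgeSet (G.neighborSet_delVerts_subsingleton hX)
  have hedges := G.card_edgeSet_delVerts_le X
  have hverts : Nat.card {v // v ∉ X} + #X = Fintype.card V := by
    rw [Nat.card_eq_fintype_card, Fintype.card_subtype_compl, Fintype.card_coe]
    have := card_le_univ X
    omega
  omega

end EdgesAvoiding

theorem tenacity_le_one_of_card_add_tauMax_le_s14 {V : Type*} [Fintype V] {G : SimpleGraph V}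
    (X : Finset V) (hcut : G.IsVertexCut X)
    (hX : #X + (G.delVerts X).tauMax ≤ (G.delVerts X).omegaComp) : G.tenacity ≤ 1 := by
  have hω : (0 : ℝ) < (G.delVerts X).omegaComp := by
    have : 1 < (G.delVerts X).omegaComp := hcut
    positivity
  calc G.tenacity ≤ ((#X : ℝ) + (G.delVerts X).tauMax) / (G.delVerts X).omegaComp :=
        csInf_le ⟨0, by rintro t ⟨Y, -, rfl⟩; positivity⟩ ⟨X, hcut, rfl⟩
    _ ≤ 1 := (div_le_one hω).mpr (by exact_mod_cast hX)

end SimpleGraph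

open Finset in
theorem unicyclic_nonadjacent_degree_three (n : ℕ) (G : SimpleGraph (Fin n))
    (hG : G.Unicyclic)
    (h : ∃ u v, u ≠ v ∧ ¬ G.Adj u v ∧ G.deg u = 3 ∧ G.deg v = 3) :
    G.tenacity ≤ 1 := by
  classical
  obtain ⟨u, v, huv, hnadj, hu, hv⟩ := h
  have hedges : #G.edgeFinset = n := by
    rw [edgeFinset_card, ← Nat.card_eq_fintype_card, hG.2, Fintype.card_fin]
  have hpair := G.card_edgeFinsetAvoiding_pair huv hnadj
  rw [← deg_eq_degree, ← deg_eq_degree, hu, hv, hedges] at hpair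
  obtain ⟨X, -, hX, hcard⟩ := G.exists_superset_card_neighborFinset_sdiff_le_one {u, v}
  rw [card_pair huv] at hcard
  have hω : #X + 2 ≤ (G.delVerts X).omegaComp :=
    G.card_add_two_le_omegaComp_delVerts hX (by rw [Fintype.card_fin]; omega)
  have hτ := tauMax_le_two (G.neighborSet_delVerts_subsingleton hX)
  exact tenacity_le_one_of_card_add_tauMax_le_s14 X (by unfold IsVertexCut; omega) (by omega)
end
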